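/- arXiv:1903.01580 — 2 statements merged into one kernel-verified Lean document; each statement's English description precedes it below -/
import Mathlib

section
/- Let $A$ be a unitary $K$-algebra with a finite complete set $\mathcal{I}$ of orthogonal idempotents and elements $\phi_e, \psi_e$ ($e \in \mathcal{I}$) with $\phi_e\psi_e e = e$ and $e\phi_e\psi_e = e$. Let $\mathcal{J} = \{\psi_e e \phi_e : e \in \mathcal{I}\}$, for $\epsilon \in \mathcal{J}$ set $\mathcal{I}_\epsilon = \{e \in \mathcal{I} : \psi_e e \phi_e = \epsilon\}$ and $\hat\epsilon = \sum_{e \in \mathcal{I}_\epsilon} e$. If $\hat\epsilon A \hat\epsilon' = \{0\}$ whenever $\epsilon \neq \epsilon'$ in $\mathcal{J}$, then $A \simeq \bigoplus_{\epsilon \in \mathcal{J}} \mathrm{Mat}_{\mathcal{I}_\epsilon}(\epsilon A \epsilon)$ as $K$-algebras. -/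
/-!
Put `u i = e i * phi i` and `v i = psi i * e i`, so that `u i * v i = e i` and
`v i * u i = psi i * e i * phi i`. The map `x ↦ (v i * x * u j)_{i,j}` is multiplicative because
`u k * v k = e k` turns the matrix product into `v i * x * ε̂ * y * u j`, and the block condition
forces `e i * x * ε̂ = e i * x` when `e i` lies in the block `ε̂`. It is injective by the Peirce
decomposition `x = ∑ e i * x * e j`, and `∑ u i * m i j * v j` is a preimage of the block
matrix `m`, since `v i * u j = 0` for `i ≠ j`.
-/

def corner (K : Type*) {A : Type*} [CommRing K] [Ring A] [Algebra K A] (a : A) :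
    NonUnitalSubalgebra K A where
  carrier := Set.range fun x => a * x * a
  add_mem' := by
    rintro x y ⟨u, rfl⟩ ⟨v, rfl⟩
    exact ⟨u + v, by simp [mul_add, add_mul]⟩
  mul_mem' := by
    rintro x y ⟨u, rfl⟩ ⟨v, rfl⟩
    exact ⟨u * a * (a * v), by simp [mul_assoc]⟩
  smul_mem' := by
    rintro c x ⟨u, rfl⟩
    exact ⟨c • u, by simp [mul_smul_comm, smul_mul_assoc]⟩
  zero_mem' := ⟨0, by simp⟩

theorem mem_corner_iff {K A : Type*} [CommRing K] [Ring A] [Algebra K A] {a z : A}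
    (ha : IsIdempotentElem a) : z ∈ corner K a ↔ a * z = z ∧ z * a = z :=
  Subsemigroup.mem_corner_iff ha

section Idempotents

variable {A ι : Type*} [Ring A] {e : ι → A}

theorem OrthogonalIdempotents.sum_mul_of_mem (he : OrthogonalIdempotents e) {i : ι}
    {s : Finset ι} (h : i ∈ s) : (∑ j ∈ s, e j) * e i = e i := by
  classical
  simp [Finset.sum_mul, he.mul_eq, h]

theorem eq_zero_of_forall_mul_mul_eq_zero [Fintype ι] (he : ∑ i, e i = 1) {x : A}
    (hx : ∀ i j, e i * x * e j = 0) : x = 0 := by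
  calc x = (∑ i, e i) * x * ∑ j, e j := by rw [he, one_mul, mul_one]
    _ = ∑ i, ∑ j, e i * x * e j := by simp_rw [Finset.sum_mul, Finset.mul_sum]
    _ = 0 := by simp [hx]

theorem mul_mul_eq_zero_of_ne [Fintype ι] {J : Type*} [DecidableEq J] {ε : ι → J}
    (he : OrthogonalIdempotents e)
    (hdisj : ∀ i j, ε i ≠ ε j → ∀ x : A,
      (∑ k ∈ Finset.univ.filter fun k => ε k = ε i, e k) * x *
        (∑ k ∈ Finset.univ.filter fun k => ε k = ε j, e k) = 0)
    {i j : ι} (hij : ε i ≠ ε j) (x : A) : e i * x * e j = 0 := by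
  set fiber : ι → A := fun l => ∑ k ∈ Finset.univ.filter fun k => ε k = ε l, e k
  have hi : e i * fiber i = e i := he.mul_sum_of_mem ((Finset.mem_filter_univ i).mpr rfl)
  have hj : fiber j * e j = e j := he.sum_mul_of_mem ((Finset.mem_filter_univ j).mpr rfl)
  calc e i * x * e j = e i * fiber i * x * (fiber j * e j) := by rw [hi, hj]
    _ = e i * (fiber i * x * fiber j) * e j := by simp only [mul_assoc]
    _ = 0 := by rw [hdisj i j hij x, mul_zero, zero_mul]

theorem mul_mul_sum_fiber [Fintype ι] {J : Type*} [DecidableEq J] {ε : ι → J}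
    (he : ∑ i, e i = 1) (hblock : ∀ i j, ε i ≠ ε j → ∀ x, e i * x * e j = 0)
    {i : ι} {a : J} (hi : ε i = a) (x : A) :
    e i * x * ∑ k : {k // ε k = a}, e k = e i * x := by
  rw [← Finset.sum_subtype (Finset.univ.filter (ε · = a)) (by simp), Finset.mul_sum,
    Finset.sum_filter_of_ne, ← Finset.mul_sum, he, mul_one]
  intro k _ hk
  by_contra hka
  exact hk (hblock i k (hi ▸ Ne.symm hka) x)

end Idempotents

/-- Murray–von Neumann equivalence of `e = u * v` and `f = v * u`, with `u ∈ eA` and `v ∈ Ae`. -/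
structure IsIdempotentEquivalence {A : Type*} [Ring A] (e f u v : A) : Prop where
  e_mul_u : e * u = u
  v_mul_e : v * e = v
  u_mul_v : u * v = e
  v_mul_u : v * u = f

namespace IsIdempotentEquivalence

variable {A : Type*} [Ring A] {e f u v : A}

theorem of_mul_mul_eq {φ ψ : A} (he : IsIdempotentElem e) (h : e * φ * ψ = e) :
    IsIdempotentEquivalence e (ψ * e * φ) (e * φ) (ψ * e) where
  e_mul_u := by rw [← mul_assoc, he.eq]
  v_mul_e := by rw [mul_assoc, he.eq]
  u_mul_v := by rw [← mul_assoc, h, he.eq]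
  v_mul_u := by rw [← mul_assoc, mul_assoc ψ, he.eq]

theorem u_mul_f (h : IsIdempotentEquivalence e f u v) : u * f = u := by
  rw [← h.v_mul_u, ← mul_assoc, h.u_mul_v, h.e_mul_u]

theorem f_mul_v (h : IsIdempotentEquivalence e f u v) : f * v = v := by
  rw [← h.v_mul_u, mul_assoc, h.u_mul_v, h.v_mul_e]

theorem isIdempotentElem_f (h : IsIdempotentEquivalence e f u v) : IsIdempotentElem f := by
  rw [IsIdempotentElem]
  nth_rw 1 [← h.v_mul_u]
  rw [mul_assoc, h.u_mul_f, h.v_mul_u]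

end IsIdempotentEquivalence

section MatrixUnits

variable {A ι : Type*} [Ring A] {e u v ε : ι → A}

theorem v_mul_u_eq_zero (he : OrthogonalIdempotents e)
    (hequiv : ∀ i, IsIdempotentEquivalence (e i) (ε i) (u i) (v i)) {i j : ι} (hij : i ≠ j) :
    v i * u j = 0 := by
  rw [← (hequiv i).v_mul_e, ← (hequiv j).e_mul_u, mul_assoc, ← mul_assoc (e i), he.ortho hij,
    zero_mul, mul_zero]

variable [Fintype ι]

theorem v_mul_sum_u_mul (he : OrthogonalIdempotents e)
    (hequiv : ∀ i, IsIdempotentEquivalence (e i) (ε i) (u i) (v i)) (g : ι → A) (a : ι) :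
    v a * ∑ i, u i * g i = ε a * g a := by
  rw [Finset.mul_sum, Finset.sum_eq_single a, ← mul_assoc, (hequiv a).v_mul_u]
  · intro i _ hi
    rw [← mul_assoc, v_mul_u_eq_zero he hequiv (Ne.symm hi), zero_mul]
  · simp

theorem sum_mul_v_mul_u (he : OrthogonalIdempotents e)
    (hequiv : ∀ i, IsIdempotentEquivalence (e i) (ε i) (u i) (v i)) (g : ι → A) (b : ι) :
    (∑ j, g j * v j) * u b = g b * ε b := by
  rw [Finset.sum_mul, Finset.sum_eq_single b, mul_assoc, (hequiv b).v_mul_u]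
  · intro j _ hj
    rw [mul_assoc, v_mul_u_eq_zero he hequiv hj, mul_zero]
  · simp

end MatrixUnits

section BlockCornerMatrices

variable {K A ι : Type*} [CommRing K] [Ring A] [Algebra K A] {e u v ε : ι → A}

theorem mul_mul_mem_corner (hequiv : ∀ i, IsIdempotentEquivalence (e i) (ε i) (u i) (v i))
    {i j : ι} {a : A} (hi : ε i = a) (hj : ε j = a) (x : A) : v i * x * u j ∈ corner K a := by
  subst hi
  refine (mem_corner_iff (hequiv i).isIdempotentElem_f).mpr ⟨?_, ?_⟩
  · rw [← mul_assoc, ← mul_assoc, (hequiv i).f_mul_v]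
  · rw [← hj, mul_assoc, (hequiv j).u_mul_f]

variable [Fintype ι] [DecidableEq A]

variable (K) in
abbrev BlockCornerMatrices (ε : ι → A) : Type _ :=
  ∀ a : {a : A // ∃ i, ε i = a}, Matrix {i // ε i = a} {i // ε i = a} (corner K (a : A))

variable (K) in
def toBlockCornerMatrices (he : CompleteOrthogonalIdempotents e)
    (hequiv : ∀ i, IsIdempotentEquivalence (e i) (ε i) (u i) (v i))
    (hblock : ∀ i j, ε i ≠ ε j → ∀ x, e i * x * e j = 0) :
    A →ₙₐ[K] BlockCornerMatrices K ε where
  toFun x a := Matrix.of fun i j => ⟨v i * x * u j, mul_mul_mem_corner hequiv i.2 j.2 x⟩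
  map_smul' c x := by ext; simp
  map_zero' := by ext; simp
  map_add' x y := by ext; simp [mul_add, add_mul]
  map_mul' x y := by
    ext a i j
    simp only [Matrix.mul_apply, Pi.mul_apply, Matrix.of_apply, AddSubmonoidClass.coe_finsetSum,
      MulMemClass.coe_mul]
    have hfiber : v i * x * ∑ k : {k // ε k = a}, e k = v i * x :=
      calc v i * x * ∑ k : {k // ε k = a}, e k
          = v i * (e i * x * ∑ k : {k // ε k = a}, e k) := by
            rw [← mul_assoc, ← mul_assoc, (hequiv i).v_mul_e]
        _ = v i * x := by
            rw [mul_mul_sum_fiber he.complete hblock i.2 x, ← mul_assoc, (hequiv i).v_mul_e]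
    calc v i * (x * y) * u j = v i * x * (∑ k : {k // ε k = a}, e k) * y * u j := by
          rw [hfiber, mul_assoc (v i) x y]
      _ = ∑ k : {k // ε k = a}, v i * x * e k * y * u j := by
          rw [Finset.mul_sum, Finset.sum_mul, Finset.sum_mul]
      _ = ∑ k : {k // ε k = a}, v i * x * u k * (v k * y * u j) :=
          Finset.sum_congr rfl fun k _ => by rw [← (hequiv k).u_mul_v]; simp only [mul_assoc]

variable (he : CompleteOrthogonalIdempotents e)
  (hequiv : ∀ i, IsIdempotentEquivalence (e i) (ε i) (u i) (v i))
  (hblock : ∀ i j, ε i ≠ ε j → ∀ x, e i * x * e j = 0)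

@[simp]
theorem toBlockCornerMatrices_apply_coe (x : A) (a : {a : A // ∃ i, ε i = a})
    (i j : {i // ε i = a}) :
    (toBlockCornerMatrices K he hequiv hblock x a i j : A) = v i * x * u j :=
  rfl

theorem toBlockCornerMatrices_injective :
    Function.Injective (toBlockCornerMatrices K he hequiv hblock) := by
  rw [injective_iff_map_eq_zero]
  intro x hx
  refine eq_zero_of_forall_mul_mul_eq_zero he.complete fun i j => ?_
  by_cases hij : ε i = ε j
  · have hentry : v i * x * u j = 0 := by
      simpa using congrArg Subtype.val
        (congrFun (congrFun (congrFun hx ⟨ε i, i, rfl⟩) ⟨i, rfl⟩) ⟨j, hij.symm⟩)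
    calc e i * x * e j = u i * (v i * x * u j) * v j := by
          rw [← (hequiv i).u_mul_v, ← (hequiv j).u_mul_v]; simp only [mul_assoc]
      _ = 0 := by rw [hentry, mul_zero, zero_mul]
  · exact hblock i j hij x

theorem toBlockCornerMatrices_surjective :
    Function.Surjective (toBlockCornerMatrices K he hequiv hblock) := by
  intro m
  -- the entries of `m` are read in the block `⟨ε i, i, rfl⟩`; by proof irrelevance this is the
  -- block `⟨a, ha⟩` whenever `ε i = a`
  let entry (i j : ι) : A :=
    if h : ε j = ε i then m ⟨ε i, i, rfl⟩ ⟨i, rfl⟩ ⟨j, h⟩ else 0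
  refine ⟨∑ i, u i * ∑ j, entry i j * v j, ?_⟩
  funext ⟨a, ha⟩
  refine Matrix.ext fun ⟨i, (hi : ε i = a)⟩ ⟨j, hj⟩ => Subtype.ext ?_
  subst hi
  have hji : ε j = ε i := hj
  obtain ⟨hleft, hright⟩ :=
    (mem_corner_iff (hequiv i).isIdempotentElem_f).mp (m ⟨ε i, ha⟩ ⟨i, rfl⟩ ⟨j, hj⟩).2
  rw [toBlockCornerMatrices_apply_coe, v_mul_sum_u_mul he.toOrthogonalIdempotents hequiv,
    mul_assoc, sum_mul_v_mul_u he.toOrthogonalIdempotents hequiv]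
  simp only [entry, dif_pos hji]
  rw [← mul_assoc, hleft]
  simpa only [hji] using hright

end BlockCornerMatrices

theorem decomposition_matrix_corners_general (K A ι : Type*) [CommRing K] [Ring A] [Algebra K A]
    [Fintype ι] [DecidableEq A]
    (e phi psi : ι → A)
    (hidem : ∀ i, IsIdempotentElem (e i))
    (horth : ∀ i j, i ≠ j → e i * e j = 0)
    (hcomplete : ∑ i, e i = 1)
    (h2 : ∀ i, e i * phi i * psi i = e i)
    (hdisj : ∀ i j : ι, psi i * e i * phi i ≠ psi j * e j * phi j →
      ∀ x : A,
        (∑ k ∈ Finset.univ.filter fun k => psi k * e k * phi k = psi i * e i * phi i, e k) * x *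
        (∑ k ∈ Finset.univ.filter fun k => psi k * e k * phi k = psi j * e j * phi j, e k) = 0) :
    ∃ f : A →ₙₐ[K] (∀ eps : {a : A // ∃ i, psi i * e i * phi i = a},
        Matrix {i : ι // psi i * e i * phi i = (eps : A)}
          {i : ι // psi i * e i * phi i = (eps : A)} (corner K (eps : A))),
      Function.Bijective f := by
  have he : CompleteOrthogonalIdempotents e := ⟨⟨hidem, horth⟩, hcomplete⟩
  have hequiv (i : ι) :
      IsIdempotentEquivalence (e i) (psi i * e i * phi i) (e i * phi i) (psi i * e i) :=
    .of_mul_mul_eq (hidem i) (h2 i)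
  have hblock (i j : ι) (hij : psi i * e i * phi i ≠ psi j * e j * phi j) (x : A) :
      e i * x * e j = 0 :=
    mul_mul_eq_zero_of_ne (ε := fun i => psi i * e i * phi i) he.toOrthogonalIdempotents hdisj
      hij x
  exact ⟨toBlockCornerMatrices K he hequiv hblock, toBlockCornerMatrices_injective he hequiv hblock,
    toBlockCornerMatrices_surjective he hequiv hblock⟩

theorem decomposition_matrix_corners (K A ι : Type*) [CommRing K] [Ring A] [Algebra K A]
    [Fintype ι] [DecidableEq ι] [DecidableEq A]
    (e phi psi : ι → A)
    (hidem : ∀ i, IsIdempotentElem (e i))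
    (horth : ∀ i j, i ≠ j → e i * e j = 0)
    (hcomplete : ∑ i, e i = 1)
    (h1 : ∀ i, phi i * psi i * e i = e i)
    (h2 : ∀ i, e i * phi i * psi i = e i)
    (hdisj : ∀ i j : ι, psi i * e i * phi i ≠ psi j * e j * phi j →
      ∀ x : A,
        (∑ k ∈ Finset.univ.filter fun k => psi k * e k * phi k = psi i * e i * phi i, e k) * x *
        (∑ k ∈ Finset.univ.filter fun k => psi k * e k * phi k = psi j * e j * phi j, e k) = 0) :
    ∃ f : A →ₙₐ[K] (∀ eps : {a : A // ∃ i, psi i * e i * phi i = a},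
        Matrix {i : ι // psi i * e i * phi i = (eps : A)}
          {i : ι // psi i * e i * phi i = (eps : A)} (corner K (eps : A))),
      Function.Bijective f :=
  decomposition_matrix_corners_general K A ι e phi psi hidem horth hcomplete h2 hdisj
end

section
/- Let $K$ be a commutative ring and let $\partial_0, \partial_1$ be the operators on the Laurent/rational function setting given by $\partial_0 = x_1^{-1}(1 - r_0)$ and $\partial_1 = (x_1 - x_2)^{-1}(r_1 - 1)$, where $r_0$ acts on $K[x_1, x_2]$ by $x_1 \mapsto -x_1$, $x_2 \mapsto x_2$, and $r_1$ swaps $x_1$ and $x_2$. Then $\partial_0$ and $\partial_1$ are well-defined operators on $K[x_1, x_2]$ (the indicated divisions are exact) and they satisfy the type-B braid relation $\partial_0 \partial_1 \partial_0 \partial_1 = \partial_1 \partial_0 \partial_1 \partial_0$. -/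
open MvPolynomial

/-!
Over any coefficient ring, `x₁` and `x₁ - x₂` are non-zero-divisors of `K[x₁, x₂]`, and
`f - r₀ f`, `r₁ f - f` vanish modulo them because `r₀`, `r₁` fix the variables modulo these
elements; so the divisions are exact and define linear operators. These operators commute with
change of coefficients, so the braid relation need only be checked over `ℤ`. There the
polynomial ring embeds in its fraction field, to which `r₀`, `r₁` extend, and the relation becomes
an identity of rational functions that uses only `r₀² = r₁² = 1`, `r₀r₁r₀r₁ = r₁r₀r₁r₀` and the
action of `r₀`, `r₁` on `x₁`, `x₂`.
-/

namespace LinearMap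

variable {R M A : Type*} [CommSemiring R] [AddCommMonoid M] [Module R M] [Semiring A] [Algebra R A]

noncomputable def divOfDvd (d : A) (hd : IsLeftRegular d) (T : M →ₗ[R] A) (hT : ∀ x, d ∣ T x) :
    M →ₗ[R] A where
  toFun x := (hT x).choose
  map_add' x y := hd <| by
    change d * (hT (x + y)).choose = d * ((hT x).choose + (hT y).choose)
    rw [mul_add, ← (hT x).choose_spec, ← (hT y).choose_spec, ← (hT (x + y)).choose_spec, map_add]
  map_smul' c x := hd <| by
    change d * (hT (c • x)).choose = d * (c • (hT x).choose)
    rw [Algebra.mul_smul_comm, ← (hT x).choose_spec, ← (hT (c • x)).choose_spec, map_smul]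

theorem mul_divOfDvd (d : A) (hd : IsLeftRegular d) (T : M →ₗ[R] A) (hT : ∀ x, d ∣ T x) (x : M) :
    d * divOfDvd d hd T hT x = T x :=
  (hT x).choose_spec.symm

end LinearMap

theorem MvPolynomial.dvd_aeval_sub_aeval {σ R S : Type*} [CommSemiring R] [CommRing S]
    [Algebra R S] {d : S} {f g : σ → S} (h : ∀ i, d ∣ f i - g i) (p : MvPolynomial σ R) :
    d ∣ aeval f p - aeval g p := by
  let π := Ideal.Quotient.mkₐ R (Ideal.span {d})
  have hπ : π.comp (aeval f) = π.comp (aeval g) :=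
    algHom_ext fun i => by
      simpa only [AlgHom.comp_apply, aeval_X, π, Ideal.Quotient.mkₐ_eq_mk] using
        Ideal.Quotient.eq.2 (Ideal.mem_span_singleton.2 (h i))
  exact Ideal.mem_span_singleton.1 (Ideal.Quotient.eq.1 (AlgHom.congr_fun hπ p))

section FractionRing

variable {A : Type*} [CommRing A] (F : Type*) [Field F] [Algebra A F]
  [IsFractionRing A F] {r : A →+* A} (hr : Function.Injective r)

noncomputable def IsFractionRing.endMap : F →+* F :=
  IsFractionRing.lift (g := (algebraMap A F).comp r) ((IsFractionRing.injective A F).comp hr)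

theorem IsFractionRing.endMap_algebraMap (a : A) :
    endMap F hr (algebraMap A F a) = algebraMap A F (r a) :=
  lift_algebraMap ..

end FractionRing

namespace TypeB

theorem braid_of_field {F : Type*} [Field F] (s₀ s₁ : F →+* F) (x₀ x₁ : F)
    (h₀₀ : ∀ t, s₀ (s₀ t) = t) (h₁₁ : ∀ t, s₁ (s₁ t) = t)
    (hbraid : ∀ t, s₀ (s₁ (s₀ (s₁ t))) = s₁ (s₀ (s₁ (s₀ t))))
    (hs₀x₀ : s₀ x₀ = -x₀) (hs₀x₁ : s₀ x₁ = x₁) (hs₁x₀ : s₁ x₀ = x₁) (hs₁x₁ : s₁ x₁ = x₀)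
    (hx₀ : x₀ ≠ 0) (hsub : x₀ - x₁ ≠ 0)
    {δ₀ δ₁ : F → F} (hδ₀ : ∀ t, δ₀ t = (t - s₀ t) / x₀)
    (hδ₁ : ∀ t, δ₁ t = (s₁ t - t) / (x₀ - x₁)) (t : F) :
    δ₀ (δ₁ (δ₀ (δ₁ t))) = δ₁ (δ₀ (δ₁ (δ₀ t))) := by
  have hs₀sub : s₀ (x₀ - x₁) = -(x₀ + x₁) := by rw [map_sub, hs₀x₀, hs₀x₁]; ring
  have hs₁sub : s₁ (x₀ - x₁) = -(x₀ - x₁) := by rw [map_sub, hs₁x₀, hs₁x₁]; ring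
  have hs₀add : s₀ (x₀ + x₁) = -(x₀ - x₁) := by rw [map_add, hs₀x₀, hs₀x₁]; ring
  have hs₁add : s₁ (x₀ + x₁) = x₀ + x₁ := by rw [map_add, hs₁x₀, hs₁x₁, add_comm]
  have hx₁ : x₁ ≠ 0 := hs₁x₀ ▸ (map_ne_zero s₁).2 hx₀
  have hadd : x₀ + x₁ ≠ 0 := neg_ne_zero.1 (hs₀sub ▸ (map_ne_zero s₀).2 hsub)
  -- pre-order (`↓`) so that the denominators are rewritten before `map_sub` splits them
  simp only [hδ₀, hδ₁, map_div₀, map_neg, ↓hs₀sub, ↓hs₁sub, ↓hs₀add, ↓hs₁add, hs₀x₀, hs₀x₁,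
    hs₁x₀, hs₁x₁, map_sub, h₀₀, h₁₁, hbraid]
  field_simp
  ring

section

variable (K : Type*) [CommRing K]

noncomputable abbrev r₀ : MvPolynomial (Fin 2) K →ₐ[K] MvPolynomial (Fin 2) K :=
  aeval ![-X 0, X 1]

noncomputable abbrev r₁ : MvPolynomial (Fin 2) K →ₐ[K] MvPolynomial (Fin 2) K :=
  aeval ![X 1, X 0]

theorem r₀_involutive : Function.Involutive (r₀ K) :=
  DFunLike.congr_fun (show (r₀ K).comp (r₀ K) = AlgHom.id K _ from
    algHom_ext fun i => by fin_cases i <;> simp)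

theorem r₁_involutive : Function.Involutive (r₁ K) :=
  DFunLike.congr_fun (show (r₁ K).comp (r₁ K) = AlgHom.id K _ from
    algHom_ext fun i => by fin_cases i <;> simp)

theorem r₀_r₁_braid (p : MvPolynomial (Fin 2) K) :
    r₀ K (r₁ K (r₀ K (r₁ K p))) = r₁ K (r₀ K (r₁ K (r₀ K p))) :=
  DFunLike.congr_fun (show (r₀ K).comp ((r₁ K).comp ((r₀ K).comp (r₁ K))) =
      (r₁ K).comp ((r₀ K).comp ((r₁ K).comp (r₀ K))) from
    algHom_ext fun i => by fin_cases i <;> simp) p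

theorem X_zero_dvd_sub_r₀ (f : MvPolynomial (Fin 2) K) : X 0 ∣ f - r₀ K f := by
  have h (i : Fin 2) : (X 0 : MvPolynomial (Fin 2) K) ∣ X i - ![-X 0, X 1] i := by
    fin_cases i
    · exact ⟨2, by simp; ring⟩
    · simp
  simpa only [aeval_X_left_apply] using dvd_aeval_sub_aeval h f

theorem X_zero_sub_X_one_dvd_r₁_sub (f : MvPolynomial (Fin 2) K) : X 0 - X 1 ∣ r₁ K f - f := by
  have h (i : Fin 2) : (X 0 - X 1 : MvPolynomial (Fin 2) K) ∣ ![X 1, X 0] i - X i := by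
    fin_cases i
    · exact ⟨-1, by simp⟩
    · simp
  simpa only [aeval_X_left_apply] using dvd_aeval_sub_aeval h f

theorem isLeftRegular_X_zero_sub_X_one : IsLeftRegular (X 0 - X 1 : MvPolynomial (Fin 2) K) := by
  have hX₁ : finSuccEquiv K 1 (X 1) = Polynomial.C (X 0) := finSuccEquiv_X_succ (j := 0)
  have hmonic : (finSuccEquiv K 1 (X 0 - X 1)).Monic := by
    rw [map_sub, finSuccEquiv_X_zero, hX₁]
    exact Polynomial.monic_X_sub_C _
  intro p q hpq
  apply (finSuccEquiv K 1).injective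
  apply hmonic.isRegular.left
  simpa only [map_mul] using congrArg (finSuccEquiv K 1) hpq

noncomputable def demazure₀ : MvPolynomial (Fin 2) K →ₗ[K] MvPolynomial (Fin 2) K :=
  LinearMap.divOfDvd (X 0) isRegular_X.left (LinearMap.id - (r₀ K).toLinearMap)
    (X_zero_dvd_sub_r₀ K)

noncomputable def demazure₁ : MvPolynomial (Fin 2) K →ₗ[K] MvPolynomial (Fin 2) K :=
  LinearMap.divOfDvd (X 0 - X 1) (isLeftRegular_X_zero_sub_X_one K)
    ((r₁ K).toLinearMap - LinearMap.id) (X_zero_sub_X_one_dvd_r₁_sub K)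

theorem X_zero_mul_demazure₀ (f : MvPolynomial (Fin 2) K) : X 0 * demazure₀ K f = f - r₀ K f :=
  LinearMap.mul_divOfDvd ..

theorem X_zero_sub_X_one_mul_demazure₁ (f : MvPolynomial (Fin 2) K) :
    (X 0 - X 1) * demazure₁ K f = r₁ K f - f :=
  LinearMap.mul_divOfDvd ..

end

section

variable {K L : Type*} [CommRing K] [CommRing L] (φ : K →+* L)

theorem map_r₀ (p : MvPolynomial (Fin 2) K) : map φ (r₀ K p) = r₀ L (map φ p) := by
  simp only [aeval_eq_bind₁, map_bind₁]
  congr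
  funext i
  fin_cases i <;> simp

theorem map_r₁ (p : MvPolynomial (Fin 2) K) : map φ (r₁ K p) = r₁ L (map φ p) := by
  simp only [aeval_eq_bind₁, map_bind₁]
  congr
  funext i
  fin_cases i <;> simp

theorem map_demazure₀ (p : MvPolynomial (Fin 2) K) :
    map φ (demazure₀ K p) = demazure₀ L (map φ p) :=
  (isRegular_X (n := 0)).left <| by
    beta_reduce
    rw [X_zero_mul_demazure₀, ← map_r₀, ← map_sub, ← X_zero_mul_demazure₀, map_mul, map_X]

theorem map_demazure₁ (p : MvPolynomial (Fin 2) K) :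
    map φ (demazure₁ K p) = demazure₁ L (map φ p) :=
  isLeftRegular_X_zero_sub_X_one L <| by
    beta_reduce
    rw [X_zero_sub_X_one_mul_demazure₁, ← map_r₁, ← map_sub, ← X_zero_sub_X_one_mul_demazure₁,
      map_mul, map_sub, map_X, map_X]

end

noncomputable abbrev Frac : Type := FractionRing (MvPolynomial (Fin 2) ℤ)

local notation "ι" => algebraMap (MvPolynomial (Fin 2) ℤ) Frac

noncomputable def s₀ : Frac →+* Frac :=
  IsFractionRing.endMap Frac (r := (r₀ ℤ).toRingHom) (r₀_involutive ℤ).injective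

noncomputable def s₁ : Frac →+* Frac :=
  IsFractionRing.endMap Frac (r := (r₁ ℤ).toRingHom) (r₁_involutive ℤ).injective

theorem s₀_algebraMap (p : MvPolynomial (Fin 2) ℤ) :
    s₀ (ι p) = ι (r₀ ℤ p) :=
  IsFractionRing.endMap_algebraMap ..

theorem s₁_algebraMap (p : MvPolynomial (Fin 2) ℤ) :
    s₁ (ι p) = ι (r₁ ℤ p) :=
  IsFractionRing.endMap_algebraMap ..

theorem frac_ringHom_ext {f g : Frac →+* Frac}
    (h : ∀ p, f (ι p) = g (ι p)) : f = g :=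
  IsLocalization.ringHom_ext (nonZeroDivisors (MvPolynomial (Fin 2) ℤ)) (RingHom.ext h)

theorem s₀_involutive : Function.Involutive s₀ :=
  DFunLike.congr_fun (show s₀.comp s₀ = RingHom.id Frac from
    frac_ringHom_ext fun p => by
      rw [RingHom.comp_apply, s₀_algebraMap, s₀_algebraMap, r₀_involutive ℤ p, RingHom.id_apply])

theorem s₁_involutive : Function.Involutive s₁ :=
  DFunLike.congr_fun (show s₁.comp s₁ = RingHom.id Frac from
    frac_ringHom_ext fun p => by
      rw [RingHom.comp_apply, s₁_algebraMap, s₁_algebraMap, r₁_involutive ℤ p, RingHom.id_apply])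

theorem s₀_s₁_braid (t : Frac) : s₀ (s₁ (s₀ (s₁ t))) = s₁ (s₀ (s₁ (s₀ t))) :=
  DFunLike.congr_fun (show s₀.comp (s₁.comp (s₀.comp s₁)) = s₁.comp (s₀.comp (s₁.comp s₀)) from
    frac_ringHom_ext fun p => by
      simp only [RingHom.comp_apply, s₀_algebraMap, s₁_algebraMap, r₀_r₁_braid ℤ p]) t

theorem algebraMap_X_zero_ne_zero : ι (X 0) ≠ 0 :=
  (map_ne_zero_iff _ (IsFractionRing.injective _ _)).2 (X_ne_zero 0)

theorem algebraMap_X_zero_sub_X_one_ne_zero : ι (X 0) - ι (X 1) ≠ 0 := by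
  rw [← map_sub]
  exact (map_ne_zero_iff _ (IsFractionRing.injective _ _)).2
    (isLeftRegular_X_zero_sub_X_one ℤ).ne_zero

theorem algebraMap_demazure₀ (f : MvPolynomial (Fin 2) ℤ) :
    ι (demazure₀ ℤ f) = (ι f - s₀ (ι f)) / ι (X 0) := by
  rw [eq_div_iff algebraMap_X_zero_ne_zero, s₀_algebraMap, ← map_sub, ← X_zero_mul_demazure₀,
    map_mul, mul_comm]

theorem algebraMap_demazure₁ (f : MvPolynomial (Fin 2) ℤ) :
    ι (demazure₁ ℤ f) = (s₁ (ι f) - ι f) / (ι (X 0) - ι (X 1)) := by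
  rw [eq_div_iff algebraMap_X_zero_sub_X_one_ne_zero, s₁_algebraMap, ← map_sub, ← map_sub,
    ← X_zero_sub_X_one_mul_demazure₁, map_mul, mul_comm]

theorem demazure_braid_int (f : MvPolynomial (Fin 2) ℤ) :
    demazure₀ ℤ (demazure₁ ℤ (demazure₀ ℤ (demazure₁ ℤ f))) =
      demazure₁ ℤ (demazure₀ ℤ (demazure₁ ℤ (demazure₀ ℤ f))) := by
  apply IsFractionRing.injective _ Frac
  simp only [algebraMap_demazure₀, algebraMap_demazure₁]
  exact braid_of_field s₀ s₁ _ _ s₀_involutive s₁_involutive s₀_s₁_braid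
    (by simp [s₀_algebraMap]) (by simp [s₀_algebraMap]) (by simp [s₁_algebraMap])
    (by simp [s₁_algebraMap]) algebraMap_X_zero_ne_zero algebraMap_X_zero_sub_X_one_ne_zero
    (δ₀ := fun t => (t - s₀ t) / ι (X 0)) (δ₁ := fun t => (s₁ t - t) / (ι (X 0) - ι (X 1)))
    (fun _ => rfl) (fun _ => rfl) _

theorem demazure_braid (K : Type*) [CommRing K] :
    demazure₀ K ∘ₗ demazure₁ K ∘ₗ demazure₀ K ∘ₗ demazure₁ K =
      demazure₁ K ∘ₗ demazure₀ K ∘ₗ demazure₁ K ∘ₗ demazure₀ K := by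
  refine linearMap_ext fun s => LinearMap.ext_ring ?_
  have hmonomial : monomial s (1 : K) = map (Int.castRingHom K) (monomial s 1) := by
    simp
  simp only [LinearMap.comp_apply, hmonomial, ← map_demazure₀, ← map_demazure₁,
    demazure_braid_int]

end TypeB

/-- The divided difference (Demazure) operators
`∂₀ f = (f - r₀ f)/x₁` and `∂₁ f = (r₁ f - f)/(x₁ - x₂)` — where `r₀ : x₁ ↦ -x₁` and
`r₁` swaps `x₁, x₂` — are well-defined `K`-linear operators on `K[x₁, x₂]` (the divisions
are exact) and satisfy the type-B braid relation `∂₀∂₁∂₀∂₁ = ∂₁∂₀∂₁∂₀`. -/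
theorem demazure_typeB_braid (K : Type*) [CommRing K] :
    ∃ D0 D1 : MvPolynomial (Fin 2) K →ₗ[K] MvPolynomial (Fin 2) K,
      (∀ f : MvPolynomial (Fin 2) K,
        X 0 * D0 f = f - aeval ![-X 0, X 1] f) ∧
      (∀ f : MvPolynomial (Fin 2) K,
        (X 0 - X 1) * D1 f = aeval ![X 1, X 0] f - f) ∧
      D0 ∘ₗ D1 ∘ₗ D0 ∘ₗ D1 = D1 ∘ₗ D0 ∘ₗ D1 ∘ₗ D0 :=
  ⟨TypeB.demazure₀ K, TypeB.demazure₁ K, TypeB.X_zero_mul_demazure₀ K,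
    TypeB.X_zero_sub_X_one_mul_demazure₁ K, TypeB.demazure_braid K⟩
end
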